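/- arXiv:2508.11720 — 2 statements merged into one kernel-verified Lean document; each statement's English description precedes it below -/
import Mathlib

section
/- For all natural numbers n, k and α, λ in a field of characteristic zero, the new type degenerate Simsek numbers can be expressed through the degenerate Stirling numbers of the second kind and Simsek numbers: y*_{1,α}(n,k;λ) = (1/k!) Σ_{ℓ=0}^{k} Σ_{j=0}^{ℓ} S_{2,α}(k,ℓ) s(ℓ,j) j! y_1(n,j;λ). -/
open Finset

/-- The degenerate falling factorial `(x)_{n,α} = ∏_{i=0}^{n-1} (x - i·α)`. -/
def degFall {R : Type*} [CommRing R] (α x : R) (n : ℕ) : R :=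
  ∏ i ∈ Finset.range n, (x - (i : R) * α)

/-- The ordinary falling factorial `(x)_n = x(x-1)⋯(x-n+1)`. -/
def fall {R : Type*} [CommRing R] (x : R) (n : ℕ) : R :=
  ∏ i ∈ Finset.range n, (x - (i : R))

/-- Signed Stirling numbers of the first kind, via the standard recurrence. -/
def stirling1 : ℕ → ℕ → ℤ
  | 0, 0 => 1
  | 0, _ + 1 => 0
  | n + 1, 0 => -(n : ℤ) * stirling1 n 0
  | n + 1, k + 1 => stirling1 n k - (n : ℤ) * stirling1 n (k + 1)

/-- The Simsek numbers `y₁(n,k;λ) = (1/k!) Σ_{j=0}^{k} C(k,j) jⁿ λʲ`. -/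
noncomputable def simsek {F : Type*} [Field F] (lam : F) (n k : ℕ) : F :=
  (k.factorial : F)⁻¹ * ∑ j ∈ Finset.range (k + 1),
    (k.choose j : F) * (j : F) ^ n * lam ^ j

/-- The new type degenerate Simsek numbers
`y*₁,α(n,k;λ) = (1/k!) Σ_{ℓ=0}^{k} Σ_{j=0}^{ℓ} C(ℓ,j) α^{k-ℓ} s(k,ℓ) λʲ jⁿ`. -/
noncomputable def ystar {F : Type*} [Field F] (α lam : F) (n k : ℕ) : F :=
  (k.factorial : F)⁻¹ * ∑ ℓ ∈ Finset.range (k + 1), ∑ j ∈ Finset.range (ℓ + 1),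
    (ℓ.choose j : F) * α ^ (k - ℓ) * ((stirling1 k ℓ : ℤ) : F) * lam ^ j * (j : F) ^ n

lemma stirling1_eq_zero : ∀ n ℓ : ℕ, n < ℓ → stirling1 n ℓ = 0
  | 0, _ + 1, _ => rfl
  | n + 1, ℓ + 1, h => by
    rw [stirling1, stirling1_eq_zero n ℓ (by omega), stirling1_eq_zero n (ℓ+1) (by omega)]
    ring

lemma degFall_eq {R : Type*} [CommRing R] (α x : R) :
    ∀ k, degFall α x k = ∑ ℓ ∈ range (k+1), ((stirling1 k ℓ : ℤ) : R) * α ^ (k - ℓ) * x ^ ℓ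
  | 0 => by simp [degFall, stirling1]
  | k + 1 => by
    have hk : degFall α x (k+1) = degFall α x k * (x - (k : R) * α) := by
      rw [degFall, degFall, prod_range_succ]
    rw [hk, degFall_eq α x k]
    -- abbreviate
    set c : ℕ → R := fun j => ((stirling1 k j : ℤ) : R) * α ^ (k - j) with hc
    have key : ∑ ℓ ∈ range (k+2), ((stirling1 (k+1) ℓ : ℤ) : R) * α ^ (k+1-ℓ) * x ^ ℓ
        = (∑ j ∈ range (k+1), c j * x ^ (j+1))
          - (k : R) * α * ∑ j ∈ range (k+1), c j * x ^ j := by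
      rw [Finset.sum_range_succ' (fun ℓ => ((stirling1 (k+1) ℓ : ℤ) : R) * α ^ (k+1-ℓ) * x ^ ℓ)]
      have h1 : ∀ j ∈ range (k+1),
          ((stirling1 (k+1) (j+1) : ℤ) : R) * α ^ (k+1-(j+1)) * x ^ (j+1)
          = c j * x ^ (j+1) - (k : R) * (((stirling1 k (j+1) : ℤ) : R) * α ^ (k-j) * x ^ (j+1)) := by
        intro j _
        have : k + 1 - (j+1) = k - j := by omega
        rw [this, stirling1, hc]; push_cast; ring
      rw [Finset.sum_congr rfl h1, Finset.sum_sub_distrib]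
      have h0 : ((stirling1 (k+1) 0 : ℤ) : R) * α ^ (k+1-0) * x ^ 0
          = -((k:R) * (((stirling1 k 0 : ℤ) : R) * α ^ (k+1))) := by
        rw [stirling1]; push_cast; ring
      have h2 : (k : R) * α * ∑ j ∈ range (k+1), c j * x ^ j
          = (∑ j ∈ range (k+1), (k : R) * (((stirling1 k (j+1) : ℤ) : R) * α ^ (k-j) * x ^ (j+1)))
            + (k:R) * (((stirling1 k 0 : ℤ) : R) * α ^ (k+1)) := by
        rw [Finset.sum_range_succ' (fun j => c j * x ^ j)]
        rw [Finset.sum_range_succ (fun j => (k : R) * (((stirling1 k (j+1) : ℤ) : R) * α ^ (k-j) * x ^ (j+1)))]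
        rw [stirling1_eq_zero k (k+1) (by omega)]
        have h3 : ∀ j ∈ range k, c (j+1) * x ^ (j+1)
            = ((stirling1 k (j+1) : ℤ) : R) * α ^ (k-(j+1)) * x ^ (j+1) := by
          intro j _; rw [hc]
        rw [Finset.sum_congr rfl h3, mul_add, Finset.mul_sum]
        have h4 : ∀ j ∈ range k,
            (k:R) * α * (((stirling1 k (j+1) : ℤ) : R) * α ^ (k-(j+1)) * x ^ (j+1))
            = (k : R) * (((stirling1 k (j+1) : ℤ) : R) * α ^ (k-j) * x ^ (j+1)) := by
          intro j hj
          have hd : k - j = (k - (j+1)) + 1 := by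
            have := Finset.mem_range.mp hj; omega
          rw [hd, pow_succ]; ring
        rw [Finset.sum_congr rfl h4, hc]
        push_cast; simp only [Nat.sub_zero, pow_zero]; ring
      rw [h0, h2]; ring
    rw [key, mul_sub]
    congr 1
    · rw [Finset.sum_mul]
      apply Finset.sum_congr rfl; intro j _; simp only [hc]; rw [pow_succ]; ring
    · rw [Finset.mul_sum, Finset.sum_mul]
      apply Finset.sum_congr rfl; intro j _; simp only [hc]; ring

lemma fall_eq {R : Type*} [CommRing R] (x : R) (k : ℕ) :
    fall x k = ∑ ℓ ∈ range (k+1), ((stirling1 k ℓ : ℤ) : R) * x ^ ℓ := by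
  have h : fall x k = degFall 1 x k := by
    unfold fall degFall; exact Finset.prod_congr rfl (by intro i _; ring)
  rw [h, degFall_eq]
  exact Finset.sum_congr rfl (by intro ℓ _; rw [one_pow]; ring)

lemma coeff_ext {F : Type*} [Field F] [CharZero F] {k : ℕ} (c d : ℕ → F)
    (h : ∀ x : F, ∑ j ∈ range (k+1), c j * x ^ j = ∑ j ∈ range (k+1), d j * x ^ j) :
    ∀ j ∈ range (k+1), c j = d j := by
  intro m hm
  have hpq : (∑ j ∈ range (k+1), Polynomial.C (c j) * Polynomial.X ^ j)
      = ∑ j ∈ range (k+1), Polynomial.C (d j) * Polynomial.X ^ j := by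
    apply Polynomial.funext
    intro x
    rw [Polynomial.eval_finset_sum, Polynomial.eval_finset_sum]
    simpa using h x
  have := congrArg (fun p => Polynomial.coeff p m) hpq
  simpa [Polynomial.coeff_C_mul, Polynomial.coeff_X_pow, Finset.sum_ite_eq',
    Finset.mem_range.mp hm, Nat.lt_succ] using this

/-- expression of the new type degenerate Simsek numbers through the
degenerate Stirling numbers of the second kind `S₂,α` (characterized by
`(x)_{k,α} = Σ_ℓ S₂,α(k,ℓ) (x)_ℓ`) and the Simsek numbers. -/
theorem ystar_eq_sum_degStirling2_stirling1_simsek (F : Type*) [Field F] [CharZero F]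
    (α lam : F) (S : ℕ → ℕ → F)
    (hS : ∀ (x : F) (m : ℕ),
      degFall α x m = ∑ ℓ ∈ Finset.range (m + 1), S m ℓ * fall x ℓ)
    (n k : ℕ) :
    ystar α lam n k =
      (k.factorial : F)⁻¹ * ∑ ℓ ∈ Finset.range (k + 1), ∑ j ∈ Finset.range (ℓ + 1),
        S k ℓ * ((stirling1 ℓ j : ℤ) : F) * (j.factorial : F) * simsek lam n j := by
  set T : ℕ → F := fun j => ∑ i ∈ range (j + 1), (j.choose i : F) * (i : F) ^ n * lam ^ i
    with hT
  have hTs : ∀ j : ℕ, (j.factorial : F) * simsek lam n j = T j := by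
    intro j
    rw [simsek, ← mul_assoc, mul_inv_cancel₀ (by exact_mod_cast j.factorial_ne_zero), one_mul, hT]
  set c : ℕ → F := fun j => ((stirling1 k j : ℤ) : F) * α ^ (k - j) with hc
  set d : ℕ → F := fun j => ∑ ℓ ∈ range (k + 1), S k ℓ * ((stirling1 ℓ j : ℤ) : F) with hd
  have hcd : ∀ j ∈ range (k + 1), c j = d j := by
    apply coeff_ext
    intro x
    have hL : ∑ j ∈ range (k + 1), c j * x ^ j = degFall α x k := by
      rw [degFall_eq]
    rw [hL, hS x k]
    have step1 : ∀ ℓ ∈ range (k+1), S k ℓ * fall x ℓ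
        = ∑ j ∈ range (k+1), S k ℓ * (((stirling1 ℓ j : ℤ) : F) * x ^ j) := by
      intro ℓ hℓ
      rw [fall_eq, Finset.mul_sum]
      apply Finset.sum_subset (Finset.range_subset_range.mpr (by
        have := Finset.mem_range.mp hℓ; omega))
      intro j _ hj
      rw [stirling1_eq_zero ℓ j (by
        have := Finset.mem_range.mp hℓ
        simp only [Finset.mem_range] at hj
        omega)]
      simp
    rw [Finset.sum_congr rfl step1, Finset.sum_comm]
    apply Finset.sum_congr rfl
    intro j _
    rw [hd]
    simp only [Finset.sum_mul]
    apply Finset.sum_congr rfl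
    intro ℓ _
    ring
  rw [ystar]
  congr 1
  calc ∑ ℓ ∈ range (k + 1), ∑ j ∈ range (ℓ + 1),
        (ℓ.choose j : F) * α ^ (k - ℓ) * ((stirling1 k ℓ : ℤ) : F) * lam ^ j * (j : F) ^ n
      = ∑ ℓ ∈ range (k + 1), c ℓ * T ℓ := by
        apply Finset.sum_congr rfl
        intro ℓ _
        rw [hT, hc, Finset.mul_sum]
        apply Finset.sum_congr rfl
        intro j _
        ring
    _ = ∑ ℓ ∈ range (k + 1), d ℓ * T ℓ := by
        apply Finset.sum_congr rfl
        intro ℓ hℓ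
        rw [hcd ℓ hℓ]
    _ = ∑ ℓ ∈ range (k + 1), ∑ j ∈ range (k + 1), S k ℓ * ((stirling1 ℓ j : ℤ) : F) * T j := by
        rw [Finset.sum_comm]
        apply Finset.sum_congr rfl
        intro j _
        rw [hd, Finset.sum_mul]
    _ = ∑ ℓ ∈ range (k + 1), ∑ j ∈ range (ℓ + 1),
          S k ℓ * ((stirling1 ℓ j : ℤ) : F) * (j.factorial : F) * simsek lam n j := by
        apply Finset.sum_congr rfl
        intro ℓ hℓ
        have hshrink : ∑ j ∈ range (ℓ + 1), S k ℓ * ((stirling1 ℓ j : ℤ) : F) * T j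
            = ∑ j ∈ range (k + 1), S k ℓ * ((stirling1 ℓ j : ℤ) : F) * T j := by
          apply Finset.sum_subset (Finset.range_subset_range.mpr (by
            have := Finset.mem_range.mp hℓ; omega))
          intro j _ hj
          rw [stirling1_eq_zero ℓ j (by
            have := Finset.mem_range.mp hℓ
            simp only [Finset.mem_range] at hj
            omega)]
          simp
        rw [← hshrink]
        apply Finset.sum_congr rfl
        intro j _
        rw [← hTs j]
        ring
end

section
/- The two-variable exponential generating function identity: Σ_{n≥0} φ*_n(x) t^n/n! = (1+αx)^{(λe^t+1)/α} as formal power series in x and t, meaning that for every k ≥ 0, Σ_{n≥0} y*_{1,α}(n,k;λ) t^n/n! = (λe^t+1)_{k,α}/k!, where (y)_{k,α} = ∏_{i=0}^{k-1}(y-iα) applied to the power series λe^t+1. -/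
open Finset

lemma stirling1_eq_zero_of_lt : ∀ {n k : ℕ}, n < k → stirling1 n k = 0 := by
  intro n
  induction n with
  | zero => intro k h; cases k with
    | zero => omega
    | succ k => rfl
  | succ n ih =>
    intro k h
    cases k with
    | zero => omega
    | succ k =>
      rw [stirling1, ih (by omega), ih (by omega)]
      ring

lemma degFall_eq_sum {R : Type*} [CommRing R] (α x : R) (k : ℕ) :
    degFall α x k =
      ∑ ℓ ∈ range (k + 1), ((stirling1 k ℓ : ℤ) : R) * α ^ (k - ℓ) * x ^ ℓ := by
  rw [degFall]
  induction k with
  | zero => simp [stirling1]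
  | succ k ih =>
    rw [Finset.prod_range_succ, ih]
    rw [Finset.sum_range_succ' _ (k + 1)]
    have hrec : ∀ ℓ : ℕ, stirling1 (k+1) (ℓ+1) = stirling1 k ℓ - (k : ℤ) * stirling1 k (ℓ+1) :=
      fun ℓ => rfl
    have h0 : stirling1 (k+1) 0 = -(k : ℤ) * stirling1 k 0 := rfl
    calc (∑ ℓ ∈ range (k+1), ((stirling1 k ℓ : ℤ) : R) * α ^ (k - ℓ) * x ^ ℓ) * (x - (k : R) * α)
        = (∑ ℓ ∈ range (k+1), ((stirling1 k ℓ : ℤ) : R) * α ^ (k - ℓ) * x ^ (ℓ+1))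
          - (k : R) * ∑ ℓ ∈ range (k+1), ((stirling1 k ℓ : ℤ) : R) * α ^ (k + 1 - ℓ) * x ^ ℓ := by
          rw [Finset.sum_mul, Finset.mul_sum, ← Finset.sum_sub_distrib]
          refine Finset.sum_congr rfl fun ℓ hℓ => ?_
          have hle : ℓ ≤ k := by simpa using Nat.lt_succ_iff.mp (Finset.mem_range.mp hℓ)
          have : k + 1 - ℓ = (k - ℓ) + 1 := by omega
          rw [this]; ring
      _ = (∑ ℓ ∈ range (k+1), ((stirling1 k ℓ : ℤ) : R) * α ^ (k - ℓ) * x ^ (ℓ+1))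
          - (k : R) * ((∑ ℓ ∈ range (k+1), ((stirling1 k (ℓ+1) : ℤ) : R) * α ^ (k - ℓ) * x ^ (ℓ+1))
            + ((stirling1 k 0 : ℤ) : R) * α ^ (k + 1) * x ^ 0) := by
          congr 2
          rw [Finset.sum_range_succ' (fun ℓ => ((stirling1 k ℓ : ℤ) : R) * α ^ (k + 1 - ℓ) * x ^ ℓ) k,
            Finset.sum_range_succ (fun ℓ => ((stirling1 k (ℓ+1) : ℤ) : R) * α ^ (k - ℓ) * x ^ (ℓ+1)) k,
            stirling1_eq_zero_of_lt (Nat.lt_succ_self k)]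
          simp [Nat.succ_sub_succ]
      _ = (∑ ℓ ∈ range (k+1), ((stirling1 (k+1) (ℓ+1) : ℤ) : R) * α ^ (k + 1 - (ℓ+1)) * x ^ (ℓ+1))
          + ((stirling1 (k+1) 0 : ℤ) : R) * α ^ (k + 1 - 0) * x ^ 0 := by
          have hterm : ∀ ℓ ∈ range (k+1),
              ((stirling1 (k+1) (ℓ+1) : ℤ) : R) * α ^ (k + 1 - (ℓ+1)) * x ^ (ℓ+1)
              = ((stirling1 k ℓ : ℤ) : R) * α ^ (k - ℓ) * x ^ (ℓ+1)
                - (k : R) * (((stirling1 k (ℓ+1) : ℤ) : R) * α ^ (k - ℓ) * x ^ (ℓ+1)) := by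
            intro ℓ _
            rw [hrec ℓ, Nat.succ_sub_succ]
            push_cast
            ring
          rw [Finset.sum_congr rfl hterm, Finset.sum_sub_distrib, h0, mul_add, Finset.mul_sum]
          push_cast
          ring

open PowerSeries in
lemma coeff_exp_pow (F : Type*) [Field F] [CharZero F] (j n : ℕ) :
    (PowerSeries.coeff n) (PowerSeries.exp F ^ j) = (j : F) ^ n * ((n.factorial : F))⁻¹ := by
  rw [PowerSeries.exp_pow_eq_rescale_exp, PowerSeries.coeff_rescale, PowerSeries.coeff_exp]
  rw [one_div, map_inv₀, map_natCast]

open PowerSeries in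
lemma lam_exp_add_one_pow (F : Type*) [Field F] [CharZero F] (lam : F) (ℓ : ℕ) :
    (C lam * PowerSeries.exp F + 1) ^ ℓ =
      ∑ j ∈ range (ℓ + 1), C ((ℓ.choose j : F) * lam ^ j) * PowerSeries.exp F ^ j := by
  rw [add_pow]
  refine Finset.sum_congr rfl fun j hj => ?_
  rw [one_pow, mul_pow, ← map_pow, map_mul, ← map_natCast (C (R := F)) (ℓ.choose j)]
  ring

open PowerSeries in
/-- the exponential generating function identity
`Σ_{n≥0} y*₁,α(n,k;λ) tⁿ/n! = (λeᵗ+1)_{k,α}/k!` in `F⟦t⟧` for each fixed `k`. -/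
theorem ystar_exponential_generating_function (F : Type*) [Field F] [CharZero F]
    (α lam : F) (k : ℕ) :
    (PowerSeries.mk fun n => ystar α lam n k * ((n.factorial : F))⁻¹) =
      C ((k.factorial : F)⁻¹) *
        degFall (C α) (C lam * PowerSeries.exp F + 1) k := by
  have hC : ∀ m : ℤ, ((m : ℤ) : F⟦X⟧) = C ((m : ℤ) : F) := fun m => (map_intCast (C (R := F)) m).symm
  ext n
  rw [PowerSeries.coeff_mk, PowerSeries.coeff_C_mul, degFall_eq_sum]
  simp only [lam_exp_add_one_pow, hC, ← map_pow (C (R := F)), Finset.mul_sum]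
  rw [map_sum]
  simp only [map_sum, ← mul_assoc, ← map_mul (C (R := F)), PowerSeries.coeff_C_mul, coeff_exp_pow]
  simp only [ystar]
  rw [mul_assoc]
  congr 1
  rw [Finset.sum_mul]
  refine Finset.sum_congr rfl fun ℓ hℓ => ?_
  rw [Finset.sum_mul]
  refine Finset.sum_congr rfl fun j hj => ?_
  ring
end
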